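/- If P[X ≤ t] ≥ p·P[Y ≤ t] for all real t with p ∈ (0,1], then there exists a coupling of X and Y such that P[X ≤ Y | Y] ≥ p almost surely, and conversely. -/

import Mathlib

/-!
Let `U` be uniform on `(0,1)` and `Q_X`, `Q_Y` the quantile functions. Put `Y = Q_Y(U)` and,
with probability `p` independently of `U`, `X = Q_X(pU)`, otherwise `X = Q_X(p + (1-p)U)`. The
mixture of `pU` and `p + (1-p)U` with weights `p`, `1-p` is again uniform, so `X` has the right
law. On the first event `X ≤ Y`, because `F_X(Q_Y(u)) ≥ p F_Y(Q_Y(u)) ≥ p u`; hence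
`P[X ≤ Y, Y ∈ S] ≥ p P[Y ∈ S]` for every Borel `S`, which is `P[X ≤ Y | Y] ≥ p` a.s.
Conversely, integrating the conditional probability over `{Y ≤ t}` gives
`p P[Y ≤ t] ≤ P[X ≤ Y ≤ t] ≤ P[X ≤ t]`.
-/

open MeasureTheory ProbabilityTheory Set

noncomputable def quantile (μ : Measure ℝ) (u : ℝ) : ℝ :=
  if u ∈ Ioo 0 1 then sInf {x | u ≤ cdf μ x} else 0

section Quantile

variable (μ : Measure ℝ)

theorem quantile_le_iff {u : ℝ} (hu : u ∈ Ioo 0 1) (x : ℝ) :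
    quantile μ u ≤ x ↔ u ≤ cdf μ x := by
  set S := {x | u ≤ cdf μ x}
  have hne : S.Nonempty :=
    ((tendsto_cdf_atTop μ).eventually (eventually_gt_nhds hu.2)).exists.imp fun _ h => h.le
  have hbdd : BddBelow S := by
    obtain ⟨x₀, hx₀⟩ := ((tendsto_cdf_atBot μ).eventually (eventually_lt_nhds hu.1)).exists
    exact ⟨x₀, fun s hs => le_of_not_ge fun hsx => (hs.trans (monotone_cdf μ hsx)).not_gt hx₀⟩
  -- right continuity of the cdf makes the infimum attained
  have hmem : sInf S ∈ S := by
    refine ge_of_tendsto (((cdf μ).right_continuous _).mono Ioi_subset_Ici_self).tendsto ?_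
    filter_upwards [self_mem_nhdsWithin] with y hy
    obtain ⟨s, hs, hsy⟩ := (csInf_lt_iff hbdd hne).mp hy
    exact hs.trans (monotone_cdf μ hsy.le)
  rw [quantile, if_pos hu]
  exact ⟨fun h => hmem.trans (monotone_cdf μ h), fun h => csInf_le hbdd h⟩

theorem le_cdf_quantile {u : ℝ} (hu : u ∈ Ioo 0 1) : u ≤ cdf μ (quantile μ u) :=
  (quantile_le_iff μ hu _).mp le_rfl

theorem monotoneOn_quantile : MonotoneOn (quantile μ) (Ioo 0 1) := fun _ hu _ hv huv =>
  (quantile_le_iff μ hu _).mpr (huv.trans (le_cdf_quantile μ hv))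

@[fun_prop]
theorem measurable_quantile : Measurable (quantile μ) := by
  refine measurable_of_restrict_of_restrict_compl (s := Ioo 0 1) measurableSet_Ioo
    (monotoneOn_quantile μ).monotone.measurable ?_
  convert measurable_const (a := (0 : ℝ)) using 1
  ext ⟨u, hu⟩
  exact if_neg hu

theorem quantile_mul_le_quantile_of_cdf {μX μY : Measure ℝ} {p : ℝ} (hp : 0 < p) (hp1 : p ≤ 1)
    (hF : ∀ t, p * cdf μY t ≤ cdf μX t) {u : ℝ} (hu : u ∈ Ioo 0 1) :
    quantile μX (p * u) ≤ quantile μY u := by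
  have hpu : p * u ∈ Ioo 0 1 :=
    ⟨mul_pos hp hu.1, (mul_le_of_le_one_left hu.1.le hp1).trans_lt hu.2⟩
  rw [quantile_le_iff μX hpu]
  calc p * u ≤ p * cdf μY (quantile μY u) := by gcongr; exact le_cdf_quantile μY hu
    _ ≤ cdf μX (quantile μY u) := hF _

end Quantile

section UnitUniform

noncomputable def unitUniform : Measure ℝ := volume.restrict (Ioo 0 1)

instance : IsProbabilityMeasure unitUniform :=
  ⟨by simp [unitUniform]⟩

theorem ae_mem_Ioo_unitUniform : ∀ᵐ u ∂unitUniform, u ∈ Ioo (0 : ℝ) 1 :=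
  ae_restrict_mem measurableSet_Ioo

theorem unitUniform_Iic {c : ℝ} (hc : c ≤ 1) : unitUniform (Iic c) = ENNReal.ofReal c := by
  rw [unitUniform, Measure.restrict_congr_set Ioo_ae_eq_Ioc,
    Measure.restrict_apply measurableSet_Iic, Iic_inter_Ioc_of_le hc, Real.volume_Ioc, sub_zero]

theorem smul_map_affine_unitUniform (a : ℝ) {c : ℝ} (hc : 0 < c) :
    ENNReal.ofReal c • unitUniform.map (fun u => a + c * u) = volume.restrict (Ioo a (a + c)) := by
  have hf : MeasurableEmbedding (fun u : ℝ => a + c * u) :=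
    (Homeomorph.addLeft a).measurableEmbedding.comp
      (Homeomorph.mulLeft₀ c hc.ne').measurableEmbedding
  have hpre : (fun u : ℝ => a + c * u) ⁻¹' Ioo a (a + c) = Ioo 0 1 := by
    ext u
    simp only [mem_preimage, mem_Ioo]
    constructor <;> rintro ⟨h1, h2⟩ <;> constructor <;> nlinarith
  have hmap : volume.map (fun u : ℝ => a + c * u) = ENNReal.ofReal c⁻¹ • volume := by
    change volume.map ((a + ·) ∘ (c * ·)) = _
    rw [← Measure.map_map (measurable_const_add a) (measurable_const_mul c),
      Real.map_volume_mul_left hc.ne', Measure.map_smul, (measurePreserving_add_left _ a).map_eq,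
      abs_of_pos (inv_pos.mpr hc)]
  rw [unitUniform, ← hpre, ← hf.restrict_map, hmap, Measure.restrict_smul, smul_smul,
    ← ENNReal.ofReal_mul hc.le, mul_inv_cancel₀ hc.ne', ENNReal.ofReal_one, one_smul]

theorem mixture_map_affine_unitUniform {p : ℝ} (hp : 0 < p) (hp1 : p ≤ 1) :
    ENNReal.ofReal p • unitUniform.map (fun u => p * u)
      + ENNReal.ofReal (1 - p) • unitUniform.map (fun u => p + (1 - p) * u) = unitUniform := by
  rcases hp1.eq_or_lt with rfl | hp1
  · simp
  have h₁ := smul_map_affine_unitUniform 0 hp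
  have h₂ := smul_map_affine_unitUniform p (sub_pos.mpr hp1)
  simp only [zero_add, add_sub_cancel] at h₁ h₂
  rw [h₁, h₂, unitUniform, Measure.restrict_congr_set (Ioo_ae_eq_Ioc (a := 0)),
    ← Measure.restrict_union (Ioc_disjoint_Ioi_same.mono_right Ioo_subset_Ioi_self)
      measurableSet_Ioo, Ioc_union_Ioo_eq_Ioo hp.le hp1]

theorem map_quantile_unitUniform (μ : Measure ℝ) [IsProbabilityMeasure μ] :
    unitUniform.map (quantile μ) = μ := by
  have : IsProbabilityMeasure (unitUniform.map (quantile μ)) :=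
    Measure.isProbabilityMeasure_map (measurable_quantile μ).aemeasurable
  refine Measure.ext_of_Iic _ _ fun x => ?_
  have hpre : quantile μ ⁻¹' Iic x =ᵐ[unitUniform] Iic (cdf μ x) := by
    filter_upwards [ae_mem_Ioo_unitUniform] with u hu
    exact propext (quantile_le_iff μ hu x)
  rw [Measure.map_apply (measurable_quantile μ) measurableSet_Iic, measure_congr hpre,
    unitUniform_Iic (cdf_le_one μ x), ofReal_cdf]

end UnitUniform

section Coupling

variable (μX μY : Measure ℝ)

noncomputable def quantileCoupling (p : ℝ) : Measure (ℝ × ℝ) :=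
  ENNReal.ofReal p • unitUniform.map (fun u => (quantile μX (p * u), quantile μY u))
    + ENNReal.ofReal (1 - p) •
      unitUniform.map (fun u => (quantile μX (p + (1 - p) * u), quantile μY u))

variable {p : ℝ}

theorem map_fst_quantileCoupling [IsProbabilityMeasure μX] (hp : 0 < p) (hp1 : p ≤ 1) :
    (quantileCoupling μX μY p).map Prod.fst = μX := by
  have hQ := measurable_quantile μX
  calc (quantileCoupling μX μY p).map Prod.fst
      = (ENNReal.ofReal p • unitUniform.map (fun u => p * u)
          + ENNReal.ofReal (1 - p) • unitUniform.map (fun u => p + (1 - p) * u)).map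
            (quantile μX) := by
        rw [quantileCoupling, Measure.map_add _ _ measurable_fst, Measure.map_add _ _ hQ]
        simp only [Measure.map_smul]
        rw [Measure.map_map measurable_fst (by fun_prop),
          Measure.map_map measurable_fst (by fun_prop), Measure.map_map hQ (by fun_prop),
          Measure.map_map hQ (by fun_prop)]
        rfl
    _ = μX := by rw [mixture_map_affine_unitUniform hp hp1, map_quantile_unitUniform]

theorem map_snd_quantileCoupling [IsProbabilityMeasure μY] (hp : 0 ≤ p) (hp1 : p ≤ 1) :
    (quantileCoupling μX μY p).map Prod.snd = μY := by
  rw [quantileCoupling, Measure.map_add _ _ measurable_snd]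
  simp only [Measure.map_smul]
  rw [Measure.map_map measurable_snd (by fun_prop), Measure.map_map measurable_snd (by fun_prop)]
  change ENNReal.ofReal p • unitUniform.map (quantile μY)
    + ENNReal.ofReal (1 - p) • unitUniform.map (quantile μY) = μY
  rw [← add_smul, ← ENNReal.ofReal_add hp (sub_nonneg.mpr hp1), add_sub_cancel,
    ENNReal.ofReal_one, one_smul, map_quantile_unitUniform]

theorem ofReal_mul_le_quantileCoupling_fst_le_snd [IsProbabilityMeasure μY] (hp : 0 < p)
    (hp1 : p ≤ 1) (hF : ∀ t, p * cdf μY t ≤ cdf μX t) {S : Set ℝ} (hS : MeasurableSet S) :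
    ENNReal.ofReal p * μY S ≤ quantileCoupling μX μY p ({w | w.1 ≤ w.2} ∩ Prod.snd ⁻¹' S) := by
  set g := fun u => (quantile μX (p * u), quantile μY u)
  have hg : Measurable g := by fun_prop
  have hA : MeasurableSet ({w : ℝ × ℝ | w.1 ≤ w.2} ∩ Prod.snd ⁻¹' S) :=
    (measurableSet_le measurable_fst measurable_snd).inter (measurable_snd hS)
  calc ENNReal.ofReal p * μY S
      = ENNReal.ofReal p * unitUniform (quantile μY ⁻¹' S) := by
        rw [← Measure.map_apply (measurable_quantile μY) hS, map_quantile_unitUniform]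
    _ ≤ ENNReal.ofReal p * unitUniform (g ⁻¹' ({w | w.1 ≤ w.2} ∩ Prod.snd ⁻¹' S)) := by
        gcongr ENNReal.ofReal p * ?_
        refine measure_mono_ae ?_
        filter_upwards [ae_mem_Ioo_unitUniform] with u hu huS
        exact ⟨quantile_mul_le_quantile_of_cdf hp hp1 hF hu, huS⟩
    _ = (ENNReal.ofReal p • unitUniform.map g) ({w | w.1 ≤ w.2} ∩ Prod.snd ⁻¹' S) := by
        rw [Measure.smul_apply, Measure.map_apply hg hA, smul_eq_mul]
    _ ≤ quantileCoupling μX μY p ({w | w.1 ≤ w.2} ∩ Prod.snd ⁻¹' S) := by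
        rw [quantileCoupling, Measure.add_apply]
        exact le_self_add

end Coupling

theorem ae_const_le_condExp_iff {Ω : Type*} {m m₀ : MeasurableSpace Ω} {μ : Measure Ω}
    [IsFiniteMeasure μ] (hm : m ≤ m₀) {f : Ω → ℝ} (hf : Integrable f μ) (c : ℝ) :
    (∀ᵐ ω ∂μ, c ≤ μ[f | m] ω) ↔ ∀ s, MeasurableSet[m] s → c * μ.real s ≤ ∫ ω in s, f ω ∂μ := by
  have hconst : ∀ s, c * μ.real s = ∫ _ in s, c ∂μ := fun s => by
    rw [setIntegral_const, smul_eq_mul, mul_comm]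
  constructor
  · intro h s hs
    rw [← setIntegral_condExp hm hf hs, hconst]
    exact setIntegral_mono_ae (integrableOn_const (measure_ne_top _ _))
      integrable_condExp.integrableOn h
  · intro h
    have : IsFiniteMeasure (μ.trim hm) := isFiniteMeasure_trim hm
    refine ae_le_of_ae_le_trim (ae_le_of_forall_setIntegral_le (integrable_const c)
      (integrable_condExp.trim hm stronglyMeasurable_condExp) fun s hs _ => ?_)
    rw [← setIntegral_trim hm stronglyMeasurable_const hs,
      ← setIntegral_trim hm stronglyMeasurable_condExp hs, setIntegral_condExp hm hf hs,
      ← hconst]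
    exact h s hs

theorem ae_const_le_condExp_indicator_comap_iff {Ω β : Type*} [MeasurableSpace Ω]
    [MeasurableSpace β] {μ : Measure Ω} [IsFiniteMeasure μ] {Y : Ω → β} (hY : Measurable Y)
    {A : Set Ω} (hA : MeasurableSet A) (c : ℝ) :
    (∀ᵐ ω ∂μ, c ≤ μ[A.indicator (fun _ => (1 : ℝ)) | MeasurableSpace.comap Y inferInstance] ω) ↔
      ∀ S, MeasurableSet S → c * μ.real (Y ⁻¹' S) ≤ μ.real (A ∩ Y ⁻¹' S) := by
  have hint : ∀ S, ∫ ω in Y ⁻¹' S, A.indicator (fun _ => (1 : ℝ)) ω ∂μ = μ.real (A ∩ Y ⁻¹' S) :=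
    fun S => by rw [setIntegral_indicator hA, setIntegral_const, smul_eq_mul, mul_one, inter_comm]
  rw [ae_const_le_condExp_iff hY.comap_le ((integrable_const 1).indicator hA)]
  refine ⟨fun h S hS => hint S ▸ h _ ⟨S, hS, rfl⟩, ?_⟩
  rintro h _ ⟨S, hS, rfl⟩
  exact (hint S).symm ▸ h S hS

theorem mul_measureReal_Iic_le_of_coupling {μX μY : Measure ℝ} {π : Measure (ℝ × ℝ)}
    [IsFiniteMeasure π] (hfst : π.map Prod.fst = μX) (hsnd : π.map Prod.snd = μY) {p : ℝ}
    (h : ∀ S, MeasurableSet S →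
      p * π.real (Prod.snd ⁻¹' S) ≤ π.real ({w | w.1 ≤ w.2} ∩ Prod.snd ⁻¹' S))
    (t : ℝ) : p * μY.real (Iic t) ≤ μX.real (Iic t) := by
  rw [← hfst, ← hsnd, map_measureReal_apply measurable_fst measurableSet_Iic,
    map_measureReal_apply measurable_snd measurableSet_Iic]
  refine (h _ measurableSet_Iic).trans (measureReal_mono fun w hw => ?_)
  exact hw.1.trans (show w.2 ≤ t from hw.2)

theorem stmt2 (μX μY : Measure ℝ) [IsProbabilityMeasure μX] [IsProbabilityMeasure μY]
    (p : ℝ) (hp : 0 < p) (hp1 : p ≤ 1) :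
    (∀ t : ℝ, p * (μY (Set.Iic t)).toReal ≤ (μX (Set.Iic t)).toReal) ↔
      (∃ π : Measure (ℝ × ℝ), IsProbabilityMeasure π ∧
        π.map Prod.fst = μX ∧ π.map Prod.snd = μY ∧
        ∀ᵐ z ∂π, p ≤
          (π[Set.indicator {w : ℝ × ℝ | w.1 ≤ w.2} (fun _ => (1 : ℝ)) |
            MeasurableSpace.comap Prod.snd inferInstance]) z) := by
  have hA : MeasurableSet {w : ℝ × ℝ | w.1 ≤ w.2} := measurableSet_le measurable_fst measurable_snd
  constructor
  · intro hF
    have hF' : ∀ t, p * cdf μY t ≤ cdf μX t := by simpa only [cdf_eq_real, measureReal_def] using hF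
    have hfst := map_fst_quantileCoupling μX μY hp hp1
    have hsnd := map_snd_quantileCoupling μX μY hp.le hp1
    have : IsProbabilityMeasure (quantileCoupling μX μY p) := by
      rw [← Measure.isProbabilityMeasure_map_iff measurable_fst.aemeasurable, hfst]
      infer_instance
    refine ⟨_, this, hfst, hsnd,
      (ae_const_le_condExp_indicator_comap_iff measurable_snd hA p).mpr fun S hS => ?_⟩
    rw [← map_measureReal_apply measurable_snd hS, hsnd]
    simpa only [measureReal_def, ENNReal.toReal_mul, ENNReal.toReal_ofReal hp.le] using
      ENNReal.toReal_mono (measure_ne_top _ _)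
        (ofReal_mul_le_quantileCoupling_fst_le_snd μX μY hp hp1 hF' hS)
  · rintro ⟨π, hπ, hfst, hsnd, hae⟩
    exact mul_measureReal_Iic_le_of_coupling hfst hsnd
      ((ae_const_le_condExp_indicator_comap_iff measurable_snd hA p).mp hae)
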